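/- Let w ∈ P₂(Ω) and define Exp_w(f) = icdf^{−1}(icdf_w + f) on O_w = {f ∈ L²([0,1]) : icdf_w + f is the quantile function of some measure in P₂(Ω)}, and Log_w(u) = icdf_u − icdf_w. Then Exp_w is a bijection from O_w onto P₂(Ω) with inverse Log_w, and W₂(u,v) = ‖Log_w(u) − Log_w(v)‖_{L²([0,1])} for all u, v ∈ P₂(Ω). -/

import Mathlib

open MeasureTheory Set

noncomputable def cdf' (μ : Measure ℝ) (x : ℝ) : ℝ := (μ (Iic x)).toReal

noncomputable def icdf (μ : Measure ℝ) (s : ℝ) : ℝ := sInf {x | s < cdf' μ x}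

noncomputable def W2 (μ ν : Measure ℝ) : ℝ :=
  sInf {r | ∃ π : Measure (ℝ × ℝ), IsProbabilityMeasure π ∧
    π.map Prod.fst = μ ∧ π.map Prod.snd = ν ∧
    r = (∫ p, (p.1 - p.2) ^ 2 ∂π) ^ (1 / 2 : ℝ)}

def memP2 (xmin xmax : ℝ) (μ : Measure ℝ) : Prop :=
  IsProbabilityMeasure μ ∧ (∀ᵐ x ∂μ, x ∈ Icc xmin xmax) ∧ Integrable (fun x => x ^ 2) μ

/-!
The quantile function `icdf μ` pushes Lebesgue measure on `(0,1)` forward to `μ`, so a measure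
is recovered from its quantile function and `Exp_w`, `Log_w` are mutually inverse.

For the isometry, write `(x - y)² = (x - m)² + (y - m)² - 2 (x - m)(y - m)` with `m` a lower
bound of the supports: minimising the transport cost over couplings `π` of `μ, ν` amounts to
maximising `∫ (x - m)(y - m) dπ`, which by Hoeffding's formula is
`∫∫_{a, b > m} π((a,∞) × (b,∞)) da db`. The Fréchet bound
`π((a,∞) × (b,∞)) ≤ min (μ(a,∞)) (ν(b,∞))` is attained by the comonotone coupling
`s ↦ (icdf μ s, icdf ν s)`, whose cost is `∫₀¹ (icdf μ s - icdf ν s)² ds`.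
-/

open Filter ProbabilityTheory

instance : IsProbabilityMeasure (volume.restrict (Ioo (0 : ℝ) 1)) :=
  ⟨by simp⟩

section Quantile

variable {μ : Measure ℝ} {s x : ℝ}

lemma cdf'_eq_cdf [IsProbabilityMeasure μ] : cdf' μ = cdf μ :=
  funext fun x => (cdf_eq_real μ x).symm

lemma nonempty_setOf_lt_cdf (hs : s < 1) : {x | s < cdf μ x}.Nonempty :=
  ((tendsto_cdf_atTop μ).eventually (lt_mem_nhds hs)).exists

lemma bddBelow_setOf_lt_cdf (hs : 0 < s) : BddBelow {x | s < cdf μ x} := by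
  obtain ⟨x₀, hx₀⟩ := ((tendsto_cdf_atBot μ).eventually (gt_mem_nhds hs)).exists
  refine ⟨x₀, fun x hx => ?_⟩
  by_contra! hlt
  exact (monotone_cdf μ hlt.le).not_gt (hx₀.trans hx)

variable [IsProbabilityMeasure μ]

lemma icdf_eq_sInf : icdf μ s = sInf {x | s < cdf μ x} := by
  rw [icdf, cdf'_eq_cdf]

lemma icdf_le_of_lt_cdf (hs : 0 < s) (h : s < cdf μ x) : icdf μ s ≤ x := by
  rw [icdf_eq_sInf]
  exact csInf_le (bddBelow_setOf_lt_cdf hs) h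

lemma le_cdf_of_icdf_le (hs : s < 1) (h : icdf μ s ≤ x) : s ≤ cdf μ x := by
  by_contra! hlt
  obtain ⟨y, hy, hxy⟩ :=
    (((cdf μ).right_continuous x).mono Ioi_subset_Ici_self |>.eventually_lt_const hlt
      |>.and self_mem_nhdsWithin).exists
  have : y ≤ icdf μ s := by
    rw [icdf_eq_sInf]
    refine le_csInf (nonempty_setOf_lt_cdf hs) fun z hz => ?_
    by_contra! hzy
    exact (monotone_cdf μ hzy.le).not_gt (hy.trans hz)
  exact (h.trans_lt hxy).not_ge this

lemma icdf_monotoneOn : MonotoneOn (icdf μ) (Ioo 0 1) := by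
  intro s hs t ht hst
  simp only [icdf_eq_sInf]
  exact csInf_le_csInf (bddBelow_setOf_lt_cdf hs.1) (nonempty_setOf_lt_cdf ht.2)
    fun x hx => hst.trans_lt hx

lemma aemeasurable_icdf : AEMeasurable (icdf μ) (volume.restrict (Ioo 0 1)) :=
  aemeasurable_restrict_of_monotoneOn measurableSet_Ioo icdf_monotoneOn

theorem map_icdf : (volume.restrict (Ioo 0 1)).map (icdf μ) = μ := by
  have := Measure.isProbabilityMeasure_map (aemeasurable_icdf (μ := μ))
  refine Measure.ext_of_Iic _ _ fun x => ?_
  rw [Measure.map_apply_of_aemeasurable aemeasurable_icdf measurableSet_Iic,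
    Measure.restrict_apply' measurableSet_Ioo, ← ofReal_cdf]
  have hlower : Ioo 0 (cdf μ x) ⊆ icdf μ ⁻¹' Iic x ∩ Ioo 0 1 := fun s hs =>
    ⟨icdf_le_of_lt_cdf hs.1 hs.2, hs.1, hs.2.trans_le (cdf_le_one μ x)⟩
  have hupper : icdf μ ⁻¹' Iic x ∩ Ioo 0 1 ⊆ Ioc 0 (cdf μ x) := fun s hs =>
    ⟨hs.2.1, le_cdf_of_icdf_le hs.2.2 hs.1⟩
  refine le_antisymm ?_ ?_
  · simpa using measure_mono (μ := volume) hupper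
  · simpa using measure_mono (μ := volume) hlower

end Quantile

/-- The paper's `icdf⁻¹`, realised as the law of `q` under the uniform distribution on `(0,1)`. -/
noncomputable def icdfInv (q : ℝ → ℝ) : Measure ℝ :=
  (volume.restrict (Ioo 0 1)).map q

theorem icdfInv_eq_of_eqOn {μ : Measure ℝ} [IsProbabilityMeasure μ] {q : ℝ → ℝ}
    (hq : EqOn q (icdf μ) (Ioo 0 1)) : icdfInv q = μ := by
  rw [icdfInv, Measure.map_congr (ae_restrict_of_forall_mem measurableSet_Ioo hq), map_icdf]

section Coupling

variable {π σ : Measure (ℝ × ℝ)} {μ ν : Measure ℝ}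

/-- Hoeffding's formula. -/
theorem lintegral_ofReal_mul_sub_eq [SFinite π] {m : ℝ} (h : ∀ᵐ p ∂π, m ≤ p.1 ∧ m ≤ p.2) :
    ∫⁻ p, ENNReal.ofReal ((p.1 - m) * (p.2 - m)) ∂π
      = ∫⁻ q in Ioi m ×ˢ Ioi m, π (Ioi q.1 ×ˢ Ioi q.2) := by
  set A : Set ((ℝ × ℝ) × (ℝ × ℝ)) := {x | x.2.1 < x.1.1 ∧ x.2.2 < x.1.2}
  have hA : MeasurableSet A :=
    .inter
      (measurableSet_lt (measurable_fst.comp measurable_snd) (measurable_fst.comp measurable_fst))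
      (measurableSet_lt (measurable_snd.comp measurable_snd) (measurable_snd.comp measurable_fst))
  rw [Measure.volume_eq_prod, ← Measure.prod_restrict]
  calc ∫⁻ p, ENNReal.ofReal ((p.1 - m) * (p.2 - m)) ∂π
      = ∫⁻ p, ((volume.restrict (Ioi m)).prod (volume.restrict (Ioi m))) (Prod.mk p ⁻¹' A) ∂π := by
        refine lintegral_congr_ae (h.mono fun p hp => ?_)
        have : Prod.mk p ⁻¹' A = Iio p.1 ×ˢ Iio p.2 := by ext; simp [A]
        dsimp only
        rw [this, Measure.prod_prod, Measure.restrict_apply measurableSet_Iio,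
          Measure.restrict_apply measurableSet_Iio, Iio_inter_Ioi, Iio_inter_Ioi,
          Real.volume_Ioo, Real.volume_Ioo, ENNReal.ofReal_mul (by linarith [hp.1])]
    _ = ∫⁻ q, π ((fun p => (p, q)) ⁻¹' A)
          ∂((volume.restrict (Ioi m)).prod (volume.restrict (Ioi m))) := by
        rw [← Measure.prod_apply hA, Measure.prod_apply_symm hA]
    _ = _ := rfl

lemma integrable_of_ae_mem_isCompact [IsFiniteMeasure π] {K : Set (ℝ × ℝ)} (hK : IsCompact K)
    {f : ℝ × ℝ → ℝ} (hf : Continuous f) (h : ∀ᵐ p ∂π, p ∈ K) : Integrable f π := by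
  rw [← Measure.restrict_eq_self_of_ae_mem h]
  exact hf.continuousOn.integrableOn_compact hK

theorem integral_mul_sub_le_of_measure_Ioi_prod_le [SFinite π] [IsFiniteMeasure σ] {m M : ℝ}
    (hπ : ∀ᵐ p ∂π, m ≤ p.1 ∧ m ≤ p.2) (hσ : ∀ᵐ p ∂σ, p ∈ Icc m M ×ˢ Icc m M)
    (h : ∀ a b, π (Ioi a ×ˢ Ioi b) ≤ σ (Ioi a ×ˢ Ioi b)) :
    ∫ p, (p.1 - m) * (p.2 - m) ∂π ≤ ∫ p, (p.1 - m) * (p.2 - m) ∂σ := by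
  have hσ' : ∀ᵐ p ∂σ, m ≤ p.1 ∧ m ≤ p.2 := hσ.mono fun p hp => ⟨hp.1.1, hp.2.1⟩
  have hσfin : ∫⁻ p, ENNReal.ofReal ((p.1 - m) * (p.2 - m)) ∂σ ≠ ⊤ :=
    (integrable_of_ae_mem_isCompact (isCompact_Icc.prod isCompact_Icc) (by fun_prop)
      hσ).lintegral_lt_top.ne
  have hnonneg {ρ : Measure (ℝ × ℝ)} (hρ : ∀ᵐ p ∂ρ, m ≤ p.1 ∧ m ≤ p.2) :
      0 ≤ᵐ[ρ] fun p => (p.1 - m) * (p.2 - m) :=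
    hρ.mono fun p hp => mul_nonneg (sub_nonneg.2 hp.1) (sub_nonneg.2 hp.2)
  rw [integral_eq_lintegral_of_nonneg_ae (hnonneg hπ) (by fun_prop),
    integral_eq_lintegral_of_nonneg_ae (hnonneg hσ') (by fun_prop)]
  refine ENNReal.toReal_mono hσfin ?_
  rw [lintegral_ofReal_mul_sub_eq hπ, lintegral_ofReal_mul_sub_eq hσ']
  exact lintegral_mono fun q => h q.1 q.2

lemma ae_mem_prod_of_map (h1 : π.map Prod.fst = μ) (h2 : π.map Prod.snd = ν) {s t : Set ℝ}
    (hs : ∀ᵐ x ∂μ, x ∈ s) (ht : ∀ᵐ y ∂ν, y ∈ t) : ∀ᵐ p ∂π, p ∈ s ×ˢ t := by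
  subst h1 h2
  filter_upwards [ae_of_ae_map measurable_fst.aemeasurable hs,
    ae_of_ae_map measurable_snd.aemeasurable ht] with p h1 h2 using ⟨h1, h2⟩

lemma measure_prod_le_min (h1 : π.map Prod.fst = μ) (h2 : π.map Prod.snd = ν) {s t : Set ℝ}
    (hs : MeasurableSet s) (ht : MeasurableSet t) : π (s ×ˢ t) ≤ min (μ s) (ν t) := by
  subst h1 h2
  rw [Measure.map_apply measurable_fst hs, Measure.map_apply measurable_snd ht]
  exact le_min (measure_mono fun p hp => hp.1) (measure_mono fun p hp => hp.2)

theorem integral_sub_sq_eq [IsFiniteMeasure π] (h1 : π.map Prod.fst = μ)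
    (h2 : π.map Prod.snd = ν) {m M : ℝ} (hπ : ∀ᵐ p ∂π, p ∈ Icc m M ×ˢ Icc m M) :
    ∫ p, (p.1 - p.2) ^ 2 ∂π
      = ∫ x, (x - m) ^ 2 ∂μ + ∫ y, (y - m) ^ 2 ∂ν - 2 * ∫ p, (p.1 - m) * (p.2 - m) ∂π := by
  have hint {f : ℝ × ℝ → ℝ} (hf : Continuous f) : Integrable f π :=
    integrable_of_ae_mem_isCompact (isCompact_Icc.prod isCompact_Icc) hf hπ
  have hfst : Integrable (fun p : ℝ × ℝ => (p.1 - m) ^ 2) π := hint (by fun_prop)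
  have hsnd : Integrable (fun p : ℝ × ℝ => (p.2 - m) ^ 2) π := hint (by fun_prop)
  have hmul : Integrable (fun p : ℝ × ℝ => (p.1 - m) * (p.2 - m)) π := hint (by fun_prop)
  have hsplit : (fun p : ℝ × ℝ => (p.1 - p.2) ^ 2) = fun p =>
      (p.1 - m) ^ 2 + (p.2 - m) ^ 2 - 2 * ((p.1 - m) * (p.2 - m)) := by
    ext; ring
  subst h1 h2
  have hsum : Integrable (fun p : ℝ × ℝ => (p.1 - m) ^ 2 + (p.2 - m) ^ 2) π := hfst.add hsnd
  rw [hsplit, integral_sub hsum (hmul.const_mul 2), integral_add hfst hsnd,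
    integral_const_mul, integral_map measurable_fst.aemeasurable (by fun_prop),
    integral_map measurable_snd.aemeasurable (by fun_prop)]

end Coupling

lemma inter_preimage_Ioi_subset_or {f g : ℝ → ℝ} {S : Set ℝ} (hf : MonotoneOn f S)
    (hg : MonotoneOn g S) (a b : ℝ) :
    S ∩ f ⁻¹' Ioi a ⊆ g ⁻¹' Ioi b ∨ S ∩ g ⁻¹' Ioi b ⊆ f ⁻¹' Ioi a := by
  rw [or_iff_not_imp_left, Set.not_subset]
  rintro ⟨r, ⟨hrS, hfr⟩, hgr⟩ t ⟨htS, hgt⟩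
  simp only [mem_preimage, mem_Ioi, not_lt] at hfr hgr hgt ⊢
  rcases le_total r t with hrt | htr
  · exact hfr.trans_le (hf hrS htS hrt)
  · exact absurd ((hg htS hrS htr).trans hgr) hgt.not_ge

theorem map_prodMk_Ioi_prod_of_monotoneOn {ρ : Measure ℝ} {S : Set ℝ} (hS : MeasurableSet S)
    {f g : ℝ → ℝ} (hf : MonotoneOn f S) (hg : MonotoneOn g S) (a b : ℝ) :
    (ρ.restrict S).map (fun s => (f s, g s)) (Ioi a ×ˢ Ioi b)
      = min ((ρ.restrict S).map f (Ioi a)) ((ρ.restrict S).map g (Ioi b)) := by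
  have hfm := aemeasurable_restrict_of_monotoneOn (μ := ρ) hS hf
  have hgm := aemeasurable_restrict_of_monotoneOn (μ := ρ) hS hg
  rw [Measure.map_apply_of_aemeasurable (hfm.prodMk hgm) (measurableSet_Ioi.prod measurableSet_Ioi),
    Measure.map_apply_of_aemeasurable hfm measurableSet_Ioi,
    Measure.map_apply_of_aemeasurable hgm measurableSet_Ioi, mk_preimage_prod,
    Measure.restrict_apply' hS, Measure.restrict_apply' hS, Measure.restrict_apply' hS]
  rcases inter_preimage_Ioi_subset_or hf hg a b with h | h
  · have : f ⁻¹' Ioi a ∩ g ⁻¹' Ioi b ∩ S = f ⁻¹' Ioi a ∩ S :=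
      Set.ext fun s => ⟨fun hs => ⟨hs.1.1, hs.2⟩, fun hs => ⟨⟨hs.1, h ⟨hs.2, hs.1⟩⟩, hs.2⟩⟩
    have hle : f ⁻¹' Ioi a ∩ S ⊆ g ⁻¹' Ioi b ∩ S := fun s hs => ⟨h ⟨hs.2, hs.1⟩, hs.2⟩
    rw [this, min_eq_left (measure_mono hle)]
  · have : f ⁻¹' Ioi a ∩ g ⁻¹' Ioi b ∩ S = g ⁻¹' Ioi b ∩ S :=
      Set.ext fun s => ⟨fun hs => ⟨hs.1.2, hs.2⟩, fun hs => ⟨⟨h ⟨hs.2, hs.1⟩, hs.1⟩, hs.2⟩⟩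
    have hle : g ⁻¹' Ioi b ∩ S ⊆ f ⁻¹' Ioi a ∩ S := fun s hs => ⟨h ⟨hs.2, hs.1⟩, hs.2⟩
    rw [this, min_eq_right (measure_mono hle)]

noncomputable def quantileCoupling (μ ν : Measure ℝ) : Measure (ℝ × ℝ) :=
  (volume.restrict (Ioo 0 1)).map fun s => (icdf μ s, icdf ν s)

section QuantileCoupling

variable {μ ν : Measure ℝ} [IsProbabilityMeasure μ] [IsProbabilityMeasure ν]

lemma aemeasurable_icdf_prodMk :
    AEMeasurable (fun s => (icdf μ s, icdf ν s)) (volume.restrict (Ioo 0 1)) :=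
  aemeasurable_icdf.prodMk aemeasurable_icdf

instance : IsProbabilityMeasure (quantileCoupling μ ν) :=
  Measure.isProbabilityMeasure_map aemeasurable_icdf_prodMk

lemma quantileCoupling_map_fst : (quantileCoupling μ ν).map Prod.fst = μ := by
  rw [quantileCoupling, AEMeasurable.map_map_of_aemeasurable measurable_fst.aemeasurable
    aemeasurable_icdf_prodMk]
  exact map_icdf

lemma quantileCoupling_map_snd : (quantileCoupling μ ν).map Prod.snd = ν := by
  rw [quantileCoupling, AEMeasurable.map_map_of_aemeasurable measurable_snd.aemeasurable
    aemeasurable_icdf_prodMk]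
  exact map_icdf

lemma quantileCoupling_Ioi_prod (a b : ℝ) :
    quantileCoupling μ ν (Ioi a ×ˢ Ioi b) = min (μ (Ioi a)) (ν (Ioi b)) := by
  rw [quantileCoupling, map_prodMk_Ioi_prod_of_monotoneOn measurableSet_Ioo icdf_monotoneOn
    icdf_monotoneOn, map_icdf, map_icdf]

lemma integral_sub_sq_quantileCoupling :
    ∫ p, (p.1 - p.2) ^ 2 ∂quantileCoupling μ ν = ∫ s in Ioo 0 1, (icdf μ s - icdf ν s) ^ 2 :=
  integral_map aemeasurable_icdf_prodMk (by fun_prop)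

theorem integral_sub_sq_quantileCoupling_le {π : Measure (ℝ × ℝ)} [IsFiniteMeasure π]
    {m M : ℝ} (hμ : ∀ᵐ x ∂μ, x ∈ Icc m M) (hν : ∀ᵐ y ∂ν, y ∈ Icc m M)
    (h1 : π.map Prod.fst = μ) (h2 : π.map Prod.snd = ν) :
    ∫ p, (p.1 - p.2) ^ 2 ∂quantileCoupling μ ν ≤ ∫ p, (p.1 - p.2) ^ 2 ∂π := by
  have hπ := ae_mem_prod_of_map h1 h2 hμ hν
  have hσ := ae_mem_prod_of_map quantileCoupling_map_fst quantileCoupling_map_snd hμ hν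
  have hcross := integral_mul_sub_le_of_measure_Ioi_prod_le
    (hπ.mono fun p hp => ⟨hp.1.1, hp.2.1⟩) hσ fun a b => by
      rw [quantileCoupling_Ioi_prod]
      exact measure_prod_le_min h1 h2 measurableSet_Ioi measurableSet_Ioi
  rw [integral_sub_sq_eq h1 h2 hπ,
    integral_sub_sq_eq quantileCoupling_map_fst quantileCoupling_map_snd hσ]
  linarith

theorem W2_eq_integral_icdf {m M : ℝ} (hμ : ∀ᵐ x ∂μ, x ∈ Icc m M)
    (hν : ∀ᵐ y ∂ν, y ∈ Icc m M) :
    W2 μ ν = (∫ s in Ioo (0 : ℝ) 1, (icdf μ s - icdf ν s) ^ 2) ^ (1 / 2 : ℝ) := by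
  refine IsLeast.csInf_eq ⟨⟨quantileCoupling μ ν, inferInstance, quantileCoupling_map_fst,
    quantileCoupling_map_snd, by rw [integral_sub_sq_quantileCoupling]⟩, ?_⟩
  rintro r ⟨π, hπ, h1, h2, rfl⟩
  rw [← integral_sub_sq_quantileCoupling]
  exact Real.rpow_le_rpow (integral_nonneg fun _ => sq_nonneg _)
    (integral_sub_sq_quantileCoupling_le hμ hν h1 h2) (by norm_num)

end QuantileCoupling

theorem stmt19_general (xmin xmax : ℝ) (w : Measure ℝ) :
    (∃ E : (ℝ → ℝ) → Measure ℝ,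
      (∀ f ∈ {f : ℝ → ℝ | ∃ u : Measure ℝ, memP2 xmin xmax u ∧
          ∀ s ∈ Ioo (0 : ℝ) 1, icdf w s + f s = icdf u s},
        memP2 xmin xmax (E f) ∧ ∀ s ∈ Ioo (0 : ℝ) 1, icdf (E f) s - icdf w s = f s) ∧
      (∀ u : Measure ℝ, memP2 xmin xmax u → E (fun s => icdf u s - icdf w s) = u)) ∧
    (∀ u v : Measure ℝ, memP2 xmin xmax u → memP2 xmin xmax v →
      W2 u v = (∫ s in Ioo (0 : ℝ) 1,
        ((icdf u s - icdf w s) - (icdf v s - icdf w s)) ^ 2) ^ (1 / 2 : ℝ)) := by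
  refine ⟨⟨fun f => icdfInv fun s => icdf w s + f s, ?_, ?_⟩, ?_⟩
  · rintro f ⟨u, hu, hf⟩
    have := hu.1
    dsimp only
    rw [icdfInv_eq_of_eqOn hf]
    exact ⟨hu, fun s hs => by linarith [hf s hs]⟩
  · intro u hu
    have := hu.1
    exact icdfInv_eq_of_eqOn fun s _ => add_sub_cancel (icdf w s) (icdf u s)
  · intro u v hu hv
    have := hu.1
    have := hv.1
    simp only [sub_sub_sub_cancel_right]
    exact W2_eq_integral_icdf hu.2.1 hv.2.1

/-- There is an exponential map Exp_w, defined on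
O_w = {f : icdf_w + f is the quantile function of some measure in P₂(Ω)}, which is a bijection
onto P₂(Ω) with inverse Log_w(u) = icdf_u − icdf_w; moreover
W₂(u,v) = ‖Log_w u − Log_w v‖_{L²([0,1])} for all u,v ∈ P₂(Ω). -/
theorem stmt19 (xmin xmax : ℝ) (hx : xmin < xmax) (w : Measure ℝ)
    (hw : memP2 xmin xmax w) :
    (∃ E : (ℝ → ℝ) → Measure ℝ,
      (∀ f ∈ {f : ℝ → ℝ | ∃ u : Measure ℝ, memP2 xmin xmax u ∧
          ∀ s ∈ Ioo (0 : ℝ) 1, icdf w s + f s = icdf u s},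
        memP2 xmin xmax (E f) ∧ ∀ s ∈ Ioo (0 : ℝ) 1, icdf (E f) s - icdf w s = f s) ∧
      (∀ u : Measure ℝ, memP2 xmin xmax u → E (fun s => icdf u s - icdf w s) = u)) ∧
    (∀ u v : Measure ℝ, memP2 xmin xmax u → memP2 xmin xmax v →
      W2 u v = (∫ s in Ioo (0 : ℝ) 1,
        ((icdf u s - icdf w s) - (icdf v s - icdf w s)) ^ 2) ^ (1 / 2 : ℝ)) :=
  stmt19_general xmin xmax w
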